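/- Bound on expected maximum load: suppose m bins receive S balls uniformly and independently at random, with loads Y₁,...,Y_m, so E[Yᵢ] = S/m. If (1/2)^{S/m} ≤ 1/m², then E[max_i Yᵢ] ≤ (e+1)·S/m. -/

import Mathlib

open MeasureTheory ProbabilityTheory Finset

/-!
The load of a bin is a sum of `S` independent indicators of mean `1/m`, so Chernoff's bound at
`t = 1` gives `P(Yᵢ ≥ e·S/m) ≤ exp(-S/m) ≤ (1/2)^(S/m) ≤ 1/m²`. By the union bound the maximum
load reaches `e·S/m` with probability at most `1/m`, and as it never exceeds `S`, splitting the
expectation on this event gives `E[max Yᵢ] ≤ e·S/m + S/m`.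
-/

open Real in
lemma Real.exp_neg_le_one_half_rpow {x : ℝ} (hx : 0 ≤ x) : exp (-x) ≤ (1 / 2 : ℝ) ^ x := by
  rw [rpow_def_of_pos (by norm_num), one_div, log_inv, exp_le_exp]
  nlinarith [log_two_lt_d9]

lemma natCast_card_fiber_eq_sum_indicator {Ω ι β : Type*} [Fintype ι] [DecidableEq β]
    (X : ι → Ω → β) (i : β) (ω : Ω) :
    (#{b | X b ω = i} : ℝ) = ∑ b, (X b ⁻¹' {i}).indicator 1 ω := by
  rw [natCast_card_filter]
  refine sum_congr rfl fun b _ => ?_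
  by_cases h : X b ω = i <;> simp [h]

namespace ProbabilityTheory

open Real

variable {Ω ι : Type*} [MeasurableSpace Ω] {μ : Measure Ω}

lemma integral_le_add_mul_measureReal_le [IsProbabilityMeasure μ] {f : Ω → ℝ}
    (hf : Measurable f) (hf_nonneg : 0 ≤ f) {t B : ℝ} (ht : 0 ≤ t) (hfB : ∀ ω, f ω ≤ B) :
    ∫ ω, f ω ∂μ ≤ t + B * μ.real {ω | t ≤ f ω} := by
  have hA : MeasurableSet {ω | t ≤ f ω} := measurableSet_le measurable_const hf
  have hsplit : ∀ ω, f ω ≤ t + {ω | t ≤ f ω}.indicator (fun _ => B) ω := by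
    intro ω
    by_cases hω : t ≤ f ω
    · rw [Set.indicator_of_mem (show ω ∈ {ω | t ≤ f ω} from hω)]
      linarith [hfB ω]
    · rw [Set.indicator_of_notMem (show ω ∉ {ω | t ≤ f ω} from hω)]
      linarith
  have hint : Integrable (fun ω => t + {ω | t ≤ f ω}.indicator (fun _ => B) ω) μ :=
    (integrable_const t).add ((integrable_const B).indicator hA)
  calc ∫ ω, f ω ∂μ ≤ ∫ ω, t + {ω | t ≤ f ω}.indicator (fun _ => B) ω ∂μ :=
        integral_mono_of_nonneg (ae_of_all _ hf_nonneg) hint (ae_of_all _ hsplit)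
    _ = t + B * μ.real {ω | t ≤ f ω} := by
        rw [integral_add (integrable_const t) ((integrable_const B).indicator hA),
          integral_const, integral_indicator_const B hA]
        simp [mul_comm]

lemma measureReal_le_sup'_le_sum [IsFiniteMeasure μ] {s : Finset ι} (hs : s.Nonempty)
    (Y : ι → Ω → ℝ) (t : ℝ) :
    μ.real {ω | t ≤ s.sup' hs fun i => Y i ω} ≤ ∑ i ∈ s, μ.real {ω | t ≤ Y i ω} := by
  have : {ω | t ≤ s.sup' hs fun i => Y i ω} = ⋃ i ∈ s, {ω | t ≤ Y i ω} := by
    ext ω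
    simp [Finset.le_sup'_iff]
  rw [this]
  exact measureReal_biUnion_finset_le s _

lemma mgf_indicator_one [IsProbabilityMeasure μ] {E : Set Ω} (hE : MeasurableSet E) (t : ℝ) :
    mgf (E.indicator 1) μ t = 1 + (exp t - 1) * μ.real E := by
  have : (fun ω => exp (t * E.indicator 1 ω))
      = fun ω => 1 + E.indicator (fun _ => exp t - 1) ω := by
    funext ω
    by_cases hω : ω ∈ E <;> simp [hω]
  rw [mgf, this, integral_add (integrable_const 1) ((integrable_const _).indicator hE),
    integral_indicator_const _ hE]
  simp [mul_comm]

variable [Fintype ι] {E : ι → Set Ω}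

lemma mgf_sum_indicator_le [IsProbabilityMeasure μ] (hE : ∀ b, MeasurableSet (E b))
    (hindep : iIndepFun (fun b => (E b).indicator (1 : Ω → ℝ)) μ) (t : ℝ) :
    mgf (∑ b, (E b).indicator 1) μ t ≤ exp ((exp t - 1) * ∑ b, μ.real (E b)) := by
  rw [hindep.mgf_sum (fun b => measurable_const.indicator (hE b)), mul_sum, exp_sum]
  refine prod_le_prod (fun b _ => mgf_nonneg) fun b _ => ?_
  rw [mgf_indicator_one (hE b), add_comm]
  exact add_one_le_exp _

lemma measureReal_exp_one_mul_le_sum_indicator_le [IsProbabilityMeasure μ]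
    (hE : ∀ b, MeasurableSet (E b))
    (hindep : iIndepFun (fun b => (E b).indicator (1 : Ω → ℝ)) μ) :
    μ.real {ω | exp 1 * ∑ b, μ.real (E b) ≤ ∑ b, (E b).indicator 1 ω}
      ≤ exp (-∑ b, μ.real (E b)) := by
  set ν := ∑ b, μ.real (E b)
  have hint : Integrable (fun ω => exp (1 * (∑ b, (E b).indicator (1 : Ω → ℝ)) ω)) μ := by
    have hmeas : Measurable (∑ b, (E b).indicator (1 : Ω → ℝ)) := by
      rw [Finset.sum_fn]
      exact Finset.measurable_sum _ fun b _ => measurable_const.indicator (hE b)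
    refine .of_bound (hmeas.const_mul 1).exp.aestronglyMeasurable (exp (Fintype.card ι))
      (ae_of_all _ fun ω => ?_)
    rw [norm_of_nonneg (exp_pos _).le, one_mul, exp_le_exp, Finset.sum_apply]
    calc ∑ b, (E b).indicator 1 ω ≤ ∑ _b : ι, (1 : ℝ) :=
          sum_le_sum fun b _ => Set.indicator_le_self' (fun _ _ => zero_le_one) ω
      _ = Fintype.card ι := by simp
  calc μ.real {ω | exp 1 * ν ≤ ∑ b, (E b).indicator 1 ω}
      ≤ exp (-1 * (exp 1 * ν)) * mgf (∑ b, (E b).indicator 1) μ 1 := by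
        simpa only [Finset.sum_apply] using measure_ge_le_exp_mul_mgf _ zero_le_one hint
    _ ≤ exp (-1 * (exp 1 * ν)) * exp ((exp 1 - 1) * ν) := by
        gcongr
        exact mgf_sum_indicator_le hE hindep 1
    _ = exp (-ν) := by rw [← exp_add]; ring_nf

lemma measureReal_exp_one_mul_le_card_fiber_le {β : Type*} [MeasurableSpace β]
    [MeasurableSingletonClass β] [DecidableEq β] {X : ι → Ω → β} (hX : ∀ b, Measurable (X b))
    (hindep : iIndepFun X μ) (i : β) :
    μ.real {ω | exp 1 * ∑ b, μ.real (X b ⁻¹' {i}) ≤ #{b | X b ω = i}}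
      ≤ exp (-∑ b, μ.real (X b ⁻¹' {i})) := by
  have := hindep.isProbabilityMeasure
  have hindep' : iIndepFun (fun b => (X b ⁻¹' {i}).indicator (1 : Ω → ℝ)) μ := by
    convert hindep.comp (fun _ => ({i} : Set β).indicator (1 : β → ℝ))
      (fun _ => measurable_const.indicator (measurableSet_singleton i)) using 2 with b
    ext ω
    by_cases h : X b ω = i <;> simp [h]
  simpa only [natCast_card_fiber_eq_sum_indicator] using
    measureReal_exp_one_mul_le_sum_indicator_le (fun b => hX b (measurableSet_singleton i)) hindep'

end ProbabilityTheory

open Real in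
theorem expected_max_load_bound_general
    {Ω : Type*} [MeasureSpace Ω] [IsProbabilityMeasure (ℙ : Measure Ω)]
    (m S : ℕ) (hm : 0 < m)
    (balls : Fin S → Ω → Fin m)
    (hmeas : ∀ b, Measurable (balls b))
    (hindep : iIndepFun balls ℙ)
    (huniform : ∀ b i, ℙ {ω | balls b ω = i} = 1 / m)
    (hcond : ((1 : ℝ) / 2) ^ ((S : ℝ) / m) ≤ 1 / (m : ℝ) ^ 2) :
    ∫ ω, ((Finset.univ.sup' (Finset.univ_nonempty_iff.2 ⟨⟨0, hm⟩⟩)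
        fun i : Fin m => (({b | balls b ω = i} : Finset (Fin S)).card : ℝ))) ∂ℙ
      ≤ (Real.exp 1 + 1) * S / m := by
  have hfiber : ∀ i, ∑ b, (ℙ : Measure Ω).real (balls b ⁻¹' {i}) = S / m := fun i => by
    simp [Measure.real, Set.preimage, huniform, div_eq_mul_inv]
  have htail : ∀ i, (ℙ : Measure Ω).real {ω | exp 1 * (S / m) ≤ (#{b | balls b ω = i} : ℝ)}
      ≤ 1 / m ^ 2 := fun i => calc
    _ ≤ exp (-(S / m)) := hfiber i ▸ measureReal_exp_one_mul_le_card_fiber_le hmeas hindep i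
    _ ≤ (1 / 2) ^ ((S : ℝ) / m) := Real.exp_neg_le_one_half_rpow (by positivity)
    _ ≤ 1 / m ^ 2 := hcond
  set maxLoad : Ω → ℝ := fun ω => univ.sup' (univ_nonempty_iff.2 ⟨⟨0, hm⟩⟩)
    fun i : Fin m => (#{b | balls b ω = i} : ℝ)
  have hmaxLoad_meas : Measurable maxLoad :=
    (measurable_of_countable fun x : Fin S → Fin m => univ.sup' (univ_nonempty_iff.2 ⟨⟨0, hm⟩⟩)
      fun i => (#{b | x b = i} : ℝ)).comp (measurable_pi_lambda _ hmeas)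
  have hmaxLoad_nonneg : 0 ≤ maxLoad := fun ω =>
    le_sup'_of_le _ (mem_univ (⟨0, hm⟩ : Fin m)) (Nat.cast_nonneg _)
  have hmaxLoad_le : ∀ ω, maxLoad ω ≤ S := fun ω =>
    sup'_le _ _ fun i _ => Nat.cast_le.2 ((card_le_univ _).trans_eq (Fintype.card_fin S))
  calc ∫ ω, maxLoad ω
      ≤ exp 1 * (S / m) + S * (ℙ : Measure Ω).real {ω | exp 1 * (S / m) ≤ maxLoad ω} :=
        integral_le_add_mul_measureReal_le hmaxLoad_meas hmaxLoad_nonneg (by positivity)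
          hmaxLoad_le
    _ ≤ exp 1 * (S / m) + S * ∑ _i : Fin m, 1 / (m : ℝ) ^ 2 := by
        gcongr
        exact (measureReal_le_sup'_le_sum _ _ _).trans (sum_le_sum fun i _ => htail i)
    _ = (exp 1 + 1) * S / m := by
        simp only [sum_const, card_univ, Fintype.card_fin, nsmul_eq_mul]
        field_simp

/-- Bound on the expected maximum load: `S` balls are thrown independently and
uniformly at random into `m` bins; `Yᵢ` is the load of bin `i` (so `E[Yᵢ] = S/m`).
If `(1/2)^(S/m) ≤ 1/m²`, then `E[max_i Yᵢ] ≤ (e+1)·S/m`. -/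
theorem expected_max_load_bound
    {Ω : Type*} [MeasureSpace Ω] [IsProbabilityMeasure (ℙ : Measure Ω)]
    (m S : ℕ) (hm : 0 < m) (hS : 0 < S)
    (balls : Fin S → Ω → Fin m)
    (hmeas : ∀ b, Measurable (balls b))
    (hindep : iIndepFun balls ℙ)
    (huniform : ∀ b i, ℙ {ω | balls b ω = i} = 1 / m)
    (hcond : ((1 : ℝ) / 2) ^ ((S : ℝ) / m) ≤ 1 / (m : ℝ) ^ 2) :
    ∫ ω, ((Finset.univ.sup' (Finset.univ_nonempty_iff.2 ⟨⟨0, hm⟩⟩)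
        fun i : Fin m => (({b | balls b ω = i} : Finset (Fin S)).card : ℝ))) ∂ℙ
      ≤ (Real.exp 1 + 1) * S / m :=
  expected_max_load_bound_general m S hm balls hmeas hindep huniform hcond
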